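/- arXiv:0710.4077 — 2 statements merged into one kernel-verified Lean document; each statement's English description precedes it below -/
import Mathlib

section
/- Let G be a group with elements a, b satisfying: (I) only the identity commutes with both a and b; (II) x²y²z² = 1 implies x, y, z pairwise commute; (III) G has unique square roots; (IV) [x², a] = 1 implies [x, a] = 1. Then for all s₁, s₂ ∈ G: (s₁ = 1 and s₂ = 1) if and only if s₁²·a·s₁²·a⁻¹·(s₂·b·s₂·b⁻¹)⁻² = 1. In particular, a conjunction of two equations over G is equivalent to a single equation. -/
/-!
Put `W = s₂ b s₂ b⁻¹`. Any word `x y x y⁻¹` equals `(x y)² (y⁻¹)²`, so an equation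
`x y x y⁻¹ = z²` is a relation `u² v² w² = 1` and (II) makes `x` commute with `y` and `y` with `z`.
Applied to `s₁² a s₁² a⁻¹ = W²`, this gives `[s₁², a] = 1`, hence `[s₁, a] = 1` by (IV); the left side
is then `(s₁²)²`, so `W = s₁²` by (III). Applied to `s₂ b s₂ b⁻¹ = s₁²`, it gives `[s₂, b] = 1` and
`[s₁, b] = 1`, so `s₁ = 1` by (I), and then `s₂² = W = 1` forces `s₂ = 1` by (III).
-/

section

variable {G : Type*} [Group G] {x y z : G}

theorem mul_mul_mul_inv_eq_mul_sq_mul_inv_sq (x y : G) :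
    x * y * x * y⁻¹ = (x * y) ^ 2 * y⁻¹ ^ 2 := by
  simp [pow_two, mul_assoc]

theorem Commute.mul_mul_mul_inv_eq_sq (h : Commute x y) : x * y * x * y⁻¹ = x ^ 2 := by
  rw [mul_assoc x y x, ← h.eq, ← mul_assoc, mul_inv_cancel_right, pow_two]

theorem Commute.of_mul_right (h : Commute (x * y) y) : Commute x y := by
  simpa using h.mul_left (Commute.refl y).inv_left

theorem commute_of_mul_mul_mul_inv_eq_sq
    (hII : ∀ x y z : G, x ^ 2 * y ^ 2 * z ^ 2 = 1 → Commute x y ∧ Commute x z ∧ Commute y z)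
    (h : x * y * x * y⁻¹ = z ^ 2) : Commute x y ∧ Commute y z := by
  have hsq : (x * y) ^ 2 * y⁻¹ ^ 2 * z⁻¹ ^ 2 = 1 := by
    rw [← mul_mul_mul_inv_eq_mul_sq_mul_inv_sq, h, inv_pow, mul_inv_cancel]
  obtain ⟨hxy, -, hyz⟩ := hII _ _ _ hsq
  exact ⟨(Commute.inv_right_iff.mp hxy).of_mul_right, Commute.inv_inv_iff.mp hyz⟩

end

theorem stmt_3 (G : Type*) [Group G] (a b : G)
    (hI : ∀ x : G, Commute x a → Commute x b → x = 1)
    (hII : ∀ x y z : G, x ^ 2 * y ^ 2 * z ^ 2 = 1 →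
      Commute x y ∧ Commute x z ∧ Commute y z)
    (hIII : ∀ x y : G, x ^ 2 = y ^ 2 → x = y)
    (hIV : ∀ x : G, Commute (x ^ 2) a → Commute x a) :
    ∀ s₁ s₂ : G, (s₁ = 1 ∧ s₂ = 1) ↔
      s₁ ^ 2 * a * s₁ ^ 2 * a⁻¹ * ((s₂ * b * s₂ * b⁻¹) ^ 2)⁻¹ = 1 := by
  intro s₁ s₂
  refine ⟨fun ⟨hs₁, hs₂⟩ => by simp [hs₁, hs₂], fun h => ?_⟩
  have hE : s₁ ^ 2 * a * s₁ ^ 2 * a⁻¹ = (s₂ * b * s₂ * b⁻¹) ^ 2 := mul_inv_eq_one.mp h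
  obtain ⟨hs₁a, -⟩ := commute_of_mul_mul_mul_inv_eq_sq hII hE
  have hW : s₂ * b * s₂ * b⁻¹ = s₁ ^ 2 := hIII _ _ (hE.symm.trans hs₁a.mul_mul_mul_inv_eq_sq)
  obtain ⟨hs₂b, hbs₁⟩ := commute_of_mul_mul_mul_inv_eq_sq hII hW
  have hs₁ : s₁ = 1 := hI s₁ (hIV s₁ hs₁a) hbs₁.symm
  refine ⟨hs₁, hIII s₂ 1 ?_⟩
  rw [← hs₂b.mul_mul_mul_inv_eq_sq, hW, hs₁]
end

section
/- Let G be a group with elements a, b satisfying axioms (I)-(IV) ((I) C(a) ∩ C(b) = 1; (II) x²y²z²=1 implies pairwise commuting; (III) unique square roots; (IV) [x²,a]=1 implies [x,a]=1). Define E(s,t) = s²·a·s²·a⁻¹·(t·b·t·b⁻¹)⁻². Then for any s₁, s₂, s₃ ∈ G: s₁ = 1 ∧ s₂ = 1 ∧ s₃ = 1 if and only if E(E(s₁, s₂), s₃) = 1. More generally, any finite conjunction of equations over G is equivalent to a single equation obtained by iterating E. -/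
/-!
If `x ^ 2 = y * c * y * c⁻¹`, then `x⁻¹ ^ 2 * (y * c) ^ 2 * c⁻¹ ^ 2 = 1`, so by (II) `y * c`
commutes with `c`, hence `y` does, and (III) gives `x = y`. Applied to `w ^ 2 = s² a s² a⁻¹`
with `w = t b t b⁻¹` (which is what `E(s, t) = 1` says), this yields `w = s ^ 2` and, through
(IV), `[s, a] = 1`; applied once more to `s ^ 2 = t b t b⁻¹` it yields `s = t` and `[t, b] = 1`.
So `s` centralizes `a` and `b`, and (I) forces `s = t = 1`. Iterating `E` along a list then
encodes any finite conjunction.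
-/

/-- The Malcev-type conjunction-encoding word: `E a b s t = 1` iff `s = 1 ∧ t = 1`
(under axioms (I)-(IV)). -/
def malcevE {G : Type*} [Group G] (a b s t : G) : G :=
  s ^ 2 * a * s ^ 2 * a⁻¹ * ((t * b * t * b⁻¹) ^ 2)⁻¹

theorem List.foldl_eq_one_iff_of_forall {α : Type*} [One α] {f : α → α → α}
    (hf : ∀ x y, f x y = 1 ↔ x = 1 ∧ y = 1) :
    ∀ (l : List α) (acc : α), l.foldl f acc = 1 ↔ acc = 1 ∧ ∀ s ∈ l, s = 1
  | [], acc => by simp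
  | x :: xs, acc => by
    rw [List.foldl_cons, List.foldl_eq_one_iff_of_forall hf xs, hf, List.forall_mem_cons]
    tauto

section MalcevAxioms

variable {G : Type*} [Group G]

theorem eq_and_commute_of_sq_eq_mul_conj
    (hII : ∀ x y z : G, x ^ 2 * y ^ 2 * z ^ 2 = 1 →
      Commute x y ∧ Commute x z ∧ Commute y z)
    (hIII : ∀ x y : G, x ^ 2 = y ^ 2 → x = y)
    {x y c : G} (h : x ^ 2 = y * c * y * c⁻¹) : x = y ∧ Commute y c := by
  have hsq : x⁻¹ ^ 2 * (y * c) ^ 2 * c⁻¹ ^ 2 = 1 := by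
    rw [inv_pow, h, sq (y * c), sq c⁻¹]
    group
  have hyc : Commute y c := by
    simpa using (hII _ _ _ hsq).2.2.mul_left (Commute.refl c⁻¹)
  refine ⟨hIII x y ?_, hyc⟩
  rw [h, mul_assoc y c y, ← hyc.eq, sq]
  group

theorem malcevE_eq_one_iff {a b : G}
    (hI : ∀ x : G, Commute x a → Commute x b → x = 1)
    (hII : ∀ x y z : G, x ^ 2 * y ^ 2 * z ^ 2 = 1 →
      Commute x y ∧ Commute x z ∧ Commute y z)
    (hIII : ∀ x y : G, x ^ 2 = y ^ 2 → x = y)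
    (hIV : ∀ x : G, Commute (x ^ 2) a → Commute x a)
    (s t : G) : malcevE a b s t = 1 ↔ s = 1 ∧ t = 1 := by
  refine ⟨fun h => ?_, by rintro ⟨rfl, rfl⟩; simp [malcevE]⟩
  have hw : (t * b * t * b⁻¹) ^ 2 = s ^ 2 * a * s ^ 2 * a⁻¹ :=
    (mul_inv_eq_one.mp h).symm
  obtain ⟨hws, hsa⟩ := eq_and_commute_of_sq_eq_mul_conj hII hIII hw
  obtain ⟨rfl, htb⟩ := eq_and_commute_of_sq_eq_mul_conj hII hIII hws.symm
  have hs : s = 1 := hI s (hIV s hsa) htb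
  exact ⟨hs, hs⟩

end MalcevAxioms

theorem stmt_17 (G : Type*) [Group G] (a b : G)
    (hI : ∀ x : G, Commute x a → Commute x b → x = 1)
    (hII : ∀ x y z : G, x ^ 2 * y ^ 2 * z ^ 2 = 1 →
      Commute x y ∧ Commute x z ∧ Commute y z)
    (hIII : ∀ x y : G, x ^ 2 = y ^ 2 → x = y)
    (hIV : ∀ x : G, Commute (x ^ 2) a → Commute x a) :
    (∀ s₁ s₂ s₃ : G, (s₁ = 1 ∧ s₂ = 1 ∧ s₃ = 1) ↔
      malcevE a b (malcevE a b s₁ s₂) s₃ = 1) ∧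
    (∀ l : List G, (∀ s ∈ l, s = 1) ↔ l.foldl (malcevE a b) 1 = 1) := by
  have hE := malcevE_eq_one_iff hI hII hIII hIV
  refine ⟨fun s₁ s₂ s₃ => ?_, fun l => ?_⟩
  · rw [hE, hE, and_assoc]
  · rw [List.foldl_eq_one_iff_of_forall hE, eq_self, true_and]
end
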